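/- Let R be a commutative ring and X an abelian group, and let ξ : X → Line_R be a monoidal assignment of free rank-one R-modules, meaning we are given an extension of abelian groups 1 → R^× → P → X → 1. Then the commutative ring ℤ[P] ⊗_{ℤ[R^×]} R (the pushout of ℤ[R^×] → R along ℤ[R^×] → ℤ[P] in commutative rings) is a free R-module with basis in bijection with X. -/

import Mathlib

open TensorProduct

section

variable (R : Type) [CommRing R]

/-- The group ring `ℤ[Rˣ]` of the group of units of `R`. -/
abbrev UnitsGroupRing := MonoidAlgebra ℤ Rˣ

/-- `R` is an algebra over `ℤ[Rˣ]` via the ring map `ℤ[Rˣ] → R` induced by the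
inclusion of the units `Rˣ → R`. -/
noncomputable def unitsAlgHom : UnitsGroupRing R →ₐ[ℤ] R :=
  MonoidAlgebra.lift ℤ R Rˣ (Units.coeHom R)

noncomputable instance : Module (UnitsGroupRing R) R :=
  Module.compHom R (unitsAlgHom R).toRingHom

instance : SMulCommClass (UnitsGroupRing R) R R :=
  ⟨fun a r' r => by
    show (unitsAlgHom R) a * (r' * r) = r' * ((unitsAlgHom R) a * r)
    ring⟩

variable (P : Type) [CommGroup P] (ι : Rˣ →* P)

/-- A type synonym for the group ring `ℤ[P]`, regarded as a module over `ℤ[Rˣ]`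
via the ring homomorphism `ℤ[Rˣ] → ℤ[P]` induced by `ι : Rˣ →* P`. -/
@[nolint unusedArguments]
def ExtGroupRing (_ : Rˣ →* P) : Type := MonoidAlgebra ℤ P

noncomputable instance : AddCommGroup (ExtGroupRing R P ι) :=
  inferInstanceAs (AddCommGroup (MonoidAlgebra ℤ P))

noncomputable instance : Module (UnitsGroupRing R) (ExtGroupRing R P ι) :=
  Module.compHom (MonoidAlgebra ℤ P) (MonoidAlgebra.mapDomainRingHom ℤ ι)

end

/-!
Every `p : P` is uniquely `s * ι u` with `s` the chosen representative of its coset modulo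
`ι(Rˣ)` and `u : Rˣ`. Since `ι(Rˣ)` acts on `ℤ[P]` through the `u`-coordinate, this identifies
`ℤ[P]` with `P ⧸ ι(Rˣ) →₀ ℤ[Rˣ]` as a `ℤ[Rˣ]`-module. Base change along `ℤ[Rˣ] → R` turns this
basis into an `R`-basis of the pushout, and exactness identifies `P ⧸ ι(Rˣ)` with `X`.
-/

-- `Algebra.ofModule` keeps the scalar action of the `Module` instance above.
noncomputable instance UnitsGroupRing.instAlgebra (R : Type) [CommRing R] :
    Algebra (UnitsGroupRing R) R :=
  Algebra.ofModule (fun _ _ _ => mul_assoc _ _ _) (fun _ _ _ => mul_left_comm _ _ _)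

namespace MonoidHom

variable {H G : Type*} [Group H] [Group G] {ι : H →* G} (hι : Function.Injective ι)

noncomputable def quotientRangeProdEquiv : G ≃ (G ⧸ ι.range) × H where
  toFun g := (g, (ofInjective hι).symm
    ⟨_, QuotientGroup.eq.mp (QuotientGroup.out_eq' (g : G ⧸ ι.range))⟩)
  invFun x := x.1.out * ι x.2
  left_inv g := by simp
  right_inv := by
    rintro ⟨q, h⟩
    have hq : ((q.out * ι h : G) : G ⧸ ι.range) = q := by
      rw [QuotientGroup.mk_mul_of_mem _ (mem_range.mpr ⟨h, rfl⟩), QuotientGroup.out_eq']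
    ext
    · exact hq
    · apply hι
      simp [hq]

lemma quotientRangeProdEquiv_mul_apply (g : G) (h : H) :
    quotientRangeProdEquiv hι (g * ι h) =
      ((quotientRangeProdEquiv hι g).1, (quotientRangeProdEquiv hι g).2 * h) := by
  have hg : ((g * ι h : G) : G ⧸ ι.range) = g :=
    QuotientGroup.mk_mul_of_mem _ (mem_range.mpr ⟨h, rfl⟩)
  ext
  · exact hg
  · apply hι
    simp [quotientRangeProdEquiv, hg, mul_assoc]

end MonoidHom

namespace ExtGroupRing

variable {R : Type} [CommRing R] {P : Type} [CommGroup P] {ι : Rˣ →* P}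

variable (ι) in
noncomputable def single (p : P) (n : ℤ) : ExtGroupRing R P ι := MonoidAlgebra.single p n

lemma single_smul_single (v : Rˣ) (k : ℤ) (p : P) (n : ℤ) :
    (MonoidAlgebra.single v k : UnitsGroupRing R) • single ι p n =
      single ι (ι v * p) (k * n) := by
  show MonoidAlgebra.mapDomainRingHom ℤ ι (MonoidAlgebra.single v k) *
    MonoidAlgebra.single p n = _
  rw [MonoidAlgebra.mapDomainRingHom_apply, MonoidAlgebra.mapDomain_single,
    MonoidAlgebra.single_mul_single]
  rfl

@[elab_as_elim]
lemma induction_linear {motive : ExtGroupRing R P ι → Prop} (x : ExtGroupRing R P ι)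
    (zero : motive 0) (add : ∀ x y, motive x → motive y → motive (x + y))
    (single : ∀ p n, motive (single ι p n)) : motive x :=
  MonoidAlgebra.induction_linear (motive := motive) x zero add single

variable (hι : Function.Injective ι)

noncomputable def cosetDecomposition :
    ExtGroupRing R P ι ≃+ (P ⧸ ι.range →₀ UnitsGroupRing R) :=
  (MonoidAlgebra.mapDomainLinearEquiv ℤ ℤ (MonoidHom.quotientRangeProdEquiv hι)).toAddEquiv.trans
    (MonoidAlgebra.curryAddEquiv.trans MonoidAlgebra.coeffAddEquiv)

lemma cosetDecomposition_single (p : P) (n : ℤ) :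
    cosetDecomposition hι (single ι p n) =
      Finsupp.single (MonoidHom.quotientRangeProdEquiv hι p).1
        (MonoidAlgebra.single (MonoidHom.quotientRangeProdEquiv hι p).2 n) := by
  change MonoidAlgebra.coeffAddEquiv (MonoidAlgebra.curryAddEquiv
    (MonoidAlgebra.mapDomainLinearEquiv ℤ ℤ _ (MonoidAlgebra.single p n))) = _
  rw [MonoidAlgebra.mapDomainLinearEquiv_single, MonoidAlgebra.curryAddEquiv_single]
  rfl

lemma cosetDecomposition_smul (a : UnitsGroupRing R) (m : ExtGroupRing R P ι) :
    cosetDecomposition hι (a • m) = a • cosetDecomposition hι m := by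
  induction a using MonoidAlgebra.induction_linear with
  | zero => simp
  | add a b ha hb => simp only [add_smul, map_add, ha, hb]
  | single v k =>
    induction m using induction_linear with
    | zero => simp
    | add f g hf hg => simp only [smul_add, map_add, hf, hg]
    | single p n =>
      rw [single_smul_single, mul_comm, cosetDecomposition_single, cosetDecomposition_single,
        MonoidHom.quotientRangeProdEquiv_mul_apply, mul_comm _ v, Finsupp.smul_single,
        smul_eq_mul, MonoidAlgebra.single_mul_single]

noncomputable def basis :
    Module.Basis (P ⧸ ι.range) (UnitsGroupRing R) (ExtGroupRing R P ι) :=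
  .ofRepr { cosetDecomposition hι with map_smul' := cosetDecomposition_smul hι }

end ExtGroupRing

/-- Let `R` be a commutative ring and `X` an abelian group, and suppose
given a monoidal assignment of `R`-lines to `X`, i.e. an extension of abelian groups
`1 → Rˣ → P → X → 1` (with `ι : Rˣ →* P` injective, `π : P →* X` surjective, and the
image of `ι` equal to the kernel of `π`).  Then the commutative ring
`ℤ[P] ⊗_{ℤ[Rˣ]} R` (the pushout of `ℤ[Rˣ] → R` along `ℤ[Rˣ] → ℤ[P]` in commutative
rings, written here as `R ⊗_{ℤ[Rˣ]} ℤ[P]`) is a free `R`-module with basis in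
bijection with `X`, i.e. it is isomorphic as an `R`-module to `X →₀ R`. -/
theorem pushout_free_on_X (R : Type) [CommRing R] (X : Type) [CommGroup X]
    (P : Type) [CommGroup P] (ι : Rˣ →* P) (π : P →* X)
    (hι : Function.Injective ι) (hπ : Function.Surjective π)
    (hexact : ∀ p : P, π p = 1 ↔ p ∈ Set.range ι) :
    Nonempty ((R ⊗[UnitsGroupRing R] ExtGroupRing R P ι) ≃ₗ[R] (X →₀ R)) := by
  have hker : ι.range = π.ker := Subgroup.ext fun p => (hexact p).symm
  let e : P ⧸ ι.range ≃* X := (QuotientGroup.quotientMulEquivOfEq hker).trans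
    (QuotientGroup.quotientKerEquivOfSurjective π hπ)
  exact ⟨(((ExtGroupRing.basis hι).reindex e.toEquiv).baseChange R).repr⟩
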